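/- arXiv:1907.07664 — 8 statements merged into one kernel-verified Lean document; each statement's English description precedes it below -/
import Mathlib

section
/- Let W(x) = Σ_{p ≤ x} (log p)/(1 − 1/p), sum over primes p ≤ x. Then for all 0 < x ≤ 7.32, W(x)/x ≤ W(7)/7. -/
/-- `W(x) = ∑_{p ≤ x} (log p)/(1 - 1/p)`. -/
noncomputable def W (x : ℝ) : ℝ :=
  ∑ p ∈ (Finset.range (⌊x⌋₊ + 1)).filter Nat.Prime, Real.log p / (1 - 1 / (p : ℝ))

theorem stmt4 (x : ℝ) (h1 : 0 < x) (h2 : x ≤ 7.32) : W x / x ≤ W 7 / 7 := by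
  have l2 : (0:ℝ) ≤ Real.log 2 := Real.log_nonneg one_le_two
  have l3 : (0:ℝ) ≤ Real.log 3 := Real.log_nonneg (by norm_num)
  have l5 : (0:ℝ) ≤ Real.log 5 := Real.log_nonneg (by norm_num)
  have l7 : (0:ℝ) ≤ Real.log 7 := Real.log_nonneg (by norm_num)
  have hW7 : W 7 = 2*Real.log 2 + (3/2)*Real.log 3 + (5/4)*Real.log 5 + (7/6)*Real.log 7 := by
    have : ⌊(7:ℝ)⌋₊ = 7 := by norm_num
    rw [W, this]
    norm_num [Finset.sum_filter, Finset.sum_range_succ]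
    ring
  have hW7nn : 0 ≤ W 7 := by rw [hW7]; positivity
  -- key numeric log inequalities
  have key2 : 60 * Real.log 2 ≤ 18 * Real.log 3 + 15 * Real.log 5 + 14 * Real.log 7 := by
    have h : Real.log ((2:ℝ)^60) ≤ Real.log ((3:ℝ)^18 * 5^15 * 7^14) :=
      Real.log_le_log (by positivity) (by norm_num)
    rw [Real.log_mul (by positivity) (by positivity), Real.log_mul (by positivity) (by positivity),
      Real.log_pow, Real.log_pow, Real.log_pow, Real.log_pow] at h
    push_cast at h
    linarith
  have key3 : 32 * Real.log 2 + 24 * Real.log 3 ≤ 15 * Real.log 5 + 14 * Real.log 7 := by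
    have h : Real.log ((2:ℝ)^32 * 3^24) ≤ Real.log ((5:ℝ)^15 * 7^14) :=
      Real.log_le_log (by positivity) (by norm_num)
    rw [Real.log_mul (by positivity) (by positivity), Real.log_mul (by positivity) (by positivity),
      Real.log_pow, Real.log_pow, Real.log_pow, Real.log_pow] at h
    push_cast at h
    linarith
  have key5 : 48 * Real.log 2 + 36 * Real.log 3 + 30 * Real.log 5 ≤ 70 * Real.log 7 := by
    have h : Real.log ((2:ℝ)^48 * 3^36 * 5^30) ≤ Real.log ((7:ℝ)^70) :=
      Real.log_le_log (by positivity) (by norm_num)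
    rw [Real.log_mul (by positivity) (by positivity), Real.log_mul (by positivity) (by positivity),
      Real.log_pow, Real.log_pow, Real.log_pow, Real.log_pow] at h
    push_cast at h
    linarith
  obtain ⟨n, hn⟩ : ∃ n, ⌊x⌋₊ = n := ⟨_, rfl⟩
  have hnx : (n:ℝ) ≤ x := hn ▸ Nat.floor_le h1.le
  have hn7 : n ≤ 7 := by
    by_contra h
    have h8 : (8:ℝ) ≤ (n:ℝ) := by exact_mod_cast (by omega : 8 ≤ n)
    linarith
  have hWx : W x = ∑ p ∈ (Finset.range (n + 1)).filter Nat.Prime,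
      Real.log p / (1 - 1 / (p : ℝ)) := by rw [W, hn]
  interval_cases n
  · -- n = 0
    have : W x = 0 := by rw [hWx]; norm_num [Finset.sum_filter, Finset.sum_range_succ]
    rw [this, zero_div]
    exact div_nonneg hW7nn (by norm_num)
  · -- n = 1
    have : W x = 0 := by rw [hWx]; norm_num [Finset.sum_filter, Finset.sum_range_succ]
    rw [this, zero_div]
    exact div_nonneg hW7nn (by norm_num)
  · -- n = 2
    have hv : W x = 2*Real.log 2 := by
      rw [hWx]; norm_num [Finset.sum_filter, Finset.sum_range_succ]; ring
    push_cast at hnx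
    rw [hv, hW7, div_le_div_iff₀ h1 (by norm_num)]
    nlinarith [mul_nonneg hW7nn (by linarith : (0:ℝ) ≤ x - 2), hW7]
  · -- n = 3
    have hv : W x = 2*Real.log 2 + (3/2)*Real.log 3 := by
      rw [hWx]; norm_num [Finset.sum_filter, Finset.sum_range_succ]; ring
    push_cast at hnx
    rw [hv, hW7, div_le_div_iff₀ h1 (by norm_num)]
    nlinarith [mul_nonneg hW7nn (by linarith : (0:ℝ) ≤ x - 3)]
  · -- n = 4
    have hv : W x = 2*Real.log 2 + (3/2)*Real.log 3 := by
      rw [hWx]; norm_num [Finset.sum_filter, Finset.sum_range_succ]; ring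
    push_cast at hnx
    rw [hv, hW7, div_le_div_iff₀ h1 (by norm_num)]
    nlinarith [mul_nonneg hW7nn (by linarith : (0:ℝ) ≤ x - 4)]
  · -- n = 5
    have hv : W x = 2*Real.log 2 + (3/2)*Real.log 3 + (5/4)*Real.log 5 := by
      rw [hWx]; norm_num [Finset.sum_filter, Finset.sum_range_succ]; ring
    push_cast at hnx
    rw [hv, hW7, div_le_div_iff₀ h1 (by norm_num)]
    nlinarith [mul_nonneg hW7nn (by linarith : (0:ℝ) ≤ x - 5)]
  · -- n = 6
    have hv : W x = 2*Real.log 2 + (3/2)*Real.log 3 + (5/4)*Real.log 5 := by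
      rw [hWx]; norm_num [Finset.sum_filter, Finset.sum_range_succ]; ring
    push_cast at hnx
    rw [hv, hW7, div_le_div_iff₀ h1 (by norm_num)]
    nlinarith [mul_nonneg hW7nn (by linarith : (0:ℝ) ≤ x - 6)]
  · -- n = 7
    have hv : W x = W 7 := by
      rw [hWx, W]; norm_num
    push_cast at hnx
    rw [hv, div_le_div_iff₀ h1 (by norm_num)]
    nlinarith [mul_nonneg hW7nn (by linarith : (0:ℝ) ≤ x - 7)]
end

section
/- Let K ≥ 0 and α > 0 be real numbers, and suppose there exists X₀ > 1 such that for all x ≥ X₀, |θ(x) − x| ≤ α x / (log x)^{K+1}, where θ(x) = Σ_{p ≤ x} log p. Let a > 0 satisfy a < (log X₀)^{K+1}. Then for all x ≥ X₀, π(x + a x / (log x)^K) − π(x) ≥ b · x / (log x)^{K+1}, where b = (1 − a/(log X₀)^{K+1}) · (a − 2α/log X₀ − α a/(log X₀)^{K+1}). -/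
noncomputable def theta (x : ℝ) : ℝ :=
  ∑ p ∈ (Finset.range (⌊x⌋₊ + 1)).filter Nat.Prime, Real.log p

noncomputable def primePi (x : ℝ) : ℕ := ((Finset.range (⌊x⌋₊ + 1)).filter Nat.Prime).card

lemma theta_sub_le {x y : ℝ} (hx : 0 ≤ x) (hxy : x ≤ y) :
    theta y - theta x ≤ ((primePi y : ℝ) - primePi x) * Real.log y := by
  classical
  set Sx := (Finset.range (⌊x⌋₊ + 1)).filter Nat.Prime with hSx
  set Sy := (Finset.range (⌊y⌋₊ + 1)).filter Nat.Prime with hSy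
  have hsub : Sx ⊆ Sy :=
    Finset.filter_subset_filter _ (Finset.range_subset_range.2 (by
      have := Nat.floor_mono hxy; omega))
  have hsplit : theta y - theta x = ∑ p ∈ Sy \ Sx, Real.log p :=
    (Finset.sum_sdiff_eq_sub hsub).symm
  have hbound : ∑ p ∈ Sy \ Sx, Real.log p ≤ (Sy \ Sx).card • Real.log y := by
    apply Finset.sum_le_card_nsmul
    intro p hp
    have hpSy : p ∈ Sy := (Finset.mem_sdiff.1 hp).1
    have hpp : p.Prime := (Finset.mem_filter.1 hpSy).2
    have hple : p ≤ ⌊y⌋₊ := Nat.lt_succ_iff.1 (Finset.mem_range.1 (Finset.mem_filter.1 hpSy).1)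
    have hpy : (p : ℝ) ≤ y := le_trans (by exact_mod_cast hple) (Nat.floor_le (hx.trans hxy))
    exact Real.log_le_log (by exact_mod_cast hpp.pos) hpy
  have hcard : ((Sy \ Sx).card : ℝ) = (primePi y : ℝ) - primePi x := by
    rw [Finset.card_sdiff_of_subset hsub]
    have := Finset.card_le_card hsub
    push_cast [Nat.cast_sub this]
    rfl
  calc theta y - theta x = ∑ p ∈ Sy \ Sx, Real.log p := hsplit
    _ ≤ (Sy \ Sx).card • Real.log y := hbound
    _ = ((Sy \ Sx).card : ℝ) * Real.log y := by rw [nsmul_eq_mul]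
    _ = ((primePi y : ℝ) - primePi x) * Real.log y := by rw [hcard]

lemma primePi_mono {x y : ℝ} (hxy : x ≤ y) : primePi x ≤ primePi y := by
  apply Finset.card_le_card
  apply Finset.filter_subset_filter
  apply Finset.range_subset_range.2
  have := Nat.floor_mono hxy; omega

set_option maxHeartbeats 1000000 in
theorem stmt5 (K α : ℝ) (hK : 0 ≤ K) (hα : 0 < α) (X₀ : ℝ) (hX₀ : 1 < X₀)
    (hθ : ∀ x : ℝ, X₀ ≤ x → |theta x - x| ≤ α * x / Real.log x ^ (K + 1))
    (a : ℝ) (ha : 0 < a) (ha' : a < Real.log X₀ ^ (K + 1)) :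
    ∀ x : ℝ, X₀ ≤ x →
      (1 - a / Real.log X₀ ^ (K + 1)) *
          (a - 2 * α / Real.log X₀ - α * a / Real.log X₀ ^ (K + 1)) *
          x / Real.log x ^ (K + 1)
        ≤ (primePi (x + a * x / Real.log x ^ K) : ℝ) - primePi x := by
  intro x hx
  have hX0pos : (0:ℝ) < X₀ := lt_trans one_pos hX₀
  have hx1 : 1 < x := lt_of_lt_of_le hX₀ hx
  have hxpos : 0 < x := lt_trans one_pos hx1
  set L₀ := Real.log X₀ with hL₀def
  set L := Real.log x with hLdef
  have hL₀pos : 0 < L₀ := Real.log_pos hX₀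
  have hL₀L : L₀ ≤ L := Real.log_le_log hX0pos hx
  have hLpos : 0 < L := lt_of_lt_of_le hL₀pos hL₀L
  have hLK : 0 < L ^ K := Real.rpow_pos_of_pos hLpos K
  have hP : 0 < L ^ (K+1) := Real.rpow_pos_of_pos hLpos _
  have hP₀ : 0 < L₀ ^ (K+1) := Real.rpow_pos_of_pos hL₀pos _
  have hPP₀ : L₀ ^ (K+1) ≤ L ^ (K+1) := Real.rpow_le_rpow hL₀pos.le hL₀L (by linarith)
  have hPadd : L ^ (K+1) = L ^ K * L := Real.rpow_add_one hLpos.ne' K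
  set s := a * x / L ^ K with hs
  have hspos : 0 < s := by positivity
  set y := x + s with hy
  have hxy : x ≤ y := le_add_of_nonneg_right hspos.le
  have hX₀y : X₀ ≤ y := hx.trans hxy
  have hy1 : 1 < y := lt_of_lt_of_le hx1 hxy
  have hypos : 0 < y := lt_trans one_pos hy1
  set Q := Real.log y with hQdef
  have hLQ : L ≤ Q := Real.log_le_log hxpos hxy
  have hQpos : 0 < Q := lt_of_lt_of_le hLpos hLQ
  have hQub : Q ≤ L + a / L ^ K := by
    have h1 : y = x * (1 + a / L ^ K) := by
      rw [hy, hs]; field_simp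
    have h2 : Q = L + Real.log (1 + a / L ^ K) := by
      rw [hQdef, h1, Real.log_mul hxpos.ne' (by positivity)]
    have h3 : Real.log (1 + a / L ^ K) ≤ a / L ^ K := by
      have := Real.log_le_sub_one_of_pos (show (0:ℝ) < 1 + a / L ^ K by positivity)
      linarith
    linarith
  have hQP : L ^ (K+1) ≤ Q ^ (K+1) := Real.rpow_le_rpow hLpos.le hLQ (by linarith)
  -- theta bounds
  have hθx : theta x ≤ x + α * x / L ^ (K+1) := by
    have := (abs_le.1 (hθ x hx)).2; linarith
  have hθy : y - α * y / Q ^ (K+1) ≤ theta y := by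
    have := (abs_le.1 (hθ y hX₀y)).1; linarith
  have hQy : α * y / Q ^ (K+1) ≤ α * y / L ^ (K+1) :=
    div_le_div_of_nonneg_left (by positivity) hP hQP
  -- lower bound for theta y - theta x
  have hθdiff : x * (a * L - 2*α - α * (a / L ^ K)) / L ^ (K+1) ≤ theta y - theta x := by
    have heq : x * (a * L - 2*α - α * (a / L ^ K)) / L ^ (K+1)
        = (y - x) - α * y / L ^ (K+1) - α * x / L ^ (K+1) := by
      rw [hy, hs, hPadd]; field_simp; ring
    rw [heq]; linarith
  -- π difference lower bound via log
  have hsum : theta y - theta x ≤ ((primePi y : ℝ) - primePi x) * Q :=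
    theta_sub_le hxpos.le hxy
  have hπ : (primePi x : ℝ) ≤ primePi y := by exact_mod_cast primePi_mono hxy
  clear_value L₀ L s y Q
  set b2 := a - 2 * α / L₀ - α * a / L₀ ^ (K+1) with hb2
  clear_value b2
  have hfac : 0 < 1 - a / L₀ ^ (K+1) := by
    have : a / L₀ ^ (K+1) < 1 := (div_lt_one hP₀).2 ha'
    linarith
  rcases le_or_gt b2 0 with hb2le | hb2pos
  · -- trivial case: LHS ≤ 0 ≤ RHS
    have h1 : (1 - a / L₀ ^ (K+1)) * b2 ≤ 0 :=
      mul_nonpos_of_nonneg_of_nonpos hfac.le hb2le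
    have h2 : (1 - a / L₀ ^ (K+1)) * b2 * x / L ^ (K+1) ≤ 0 := by
      apply div_nonpos_of_nonpos_of_nonneg _ hP.le
      exact mul_nonpos_of_nonpos_of_nonneg h1 hxpos.le
    have h3 : (0:ℝ) ≤ (primePi y : ℝ) - primePi x := by linarith
    calc (1 - a / L₀ ^ (K+1)) * b2 * x / L ^ (K+1) ≤ 0 := h2
      _ ≤ (primePi y : ℝ) - primePi x := h3
  · -- main case
    -- Step A : L * b2 ≤ a*L - 2α - α*(a/L^K)
    have hA : L * b2 ≤ a * L - 2*α - α * (a / L ^ K) := by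
      have h1 : 2 * α ≤ 2 * α / L₀ * L := by
        have := mul_le_mul_of_nonneg_left hL₀L (show (0:ℝ) ≤ 2*α/L₀ by positivity)
        have he : 2 * α / L₀ * L₀ = 2 * α := by field_simp
        linarith
      have h2 : α * (a / L ^ K) ≤ α * a / L₀ ^ (K+1) * L := by
        have he : α * (a / L ^ K) = α * a * L / L ^ (K+1) := by
          rw [hPadd]; field_simp
        have hd : α * a * L / L ^ (K+1) ≤ α * a * L / L₀ ^ (K+1) :=
          div_le_div_of_nonneg_left (by positivity) hP₀ hPP₀
        rw [he]
        calc α * a * L / L ^ (K+1) ≤ α * a * L / L₀ ^ (K+1) := hd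
          _ = α * a / L₀ ^ (K+1) * L := by ring
      rw [hb2]; nlinarith [h1, h2]
    -- Step B : (1 - a/L₀^(K+1)) * Q ≤ L
    have hB : (1 - a / L₀ ^ (K+1)) * Q ≤ L := by
      have h3 : a / L ^ (K+1) ≤ a / L₀ ^ (K+1) :=
        div_le_div_of_nonneg_left ha.le hP₀ hPP₀
      have h4 : 0 ≤ 1 - a / L ^ (K+1) := by linarith
      have h5 : (1 - a / L₀ ^ (K+1)) * Q ≤ (1 - a / L ^ (K+1)) * Q :=
        mul_le_mul_of_nonneg_right (by linarith) hQpos.le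
      have h6 : (1 - a / L ^ (K+1)) * Q ≤ (1 - a / L ^ (K+1)) * (L + a / L ^ K) :=
        mul_le_mul_of_nonneg_left hQub h4
      have h7 : (1 - a / L ^ (K+1)) * (L + a / L ^ K) = L - a^2 / (L ^ K * L ^ K * L) := by
        rw [hPadd]; field_simp; ring
      have h8 : 0 ≤ a^2 / (L ^ K * L ^ K * L) := by positivity
      linarith
    -- assemble
    have hchain : x * (L * b2) / L ^ (K+1) ≤ ((primePi y : ℝ) - primePi x) * Q := by
      have hmono : x * (L * b2) / L ^ (K+1) ≤ x * (a * L - 2*α - α * (a / L ^ K)) / L ^ (K+1) := by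
        exact (div_le_div_iff_of_pos_right hP).2 (mul_le_mul_of_nonneg_left hA hxpos.le)
      linarith
    have hfinal : (1 - a / L₀ ^ (K+1)) * b2 * x / L ^ (K+1) * Q ≤ ((primePi y : ℝ) - primePi x) * Q := by
      have e1 : (1 - a / L₀ ^ (K+1)) * b2 * x / L ^ (K+1) * Q
          = ((1 - a / L₀ ^ (K+1)) * Q) * (b2 * x / L ^ (K+1)) := by ring
      have e2 : L * (b2 * x / L ^ (K+1)) = x * (L * b2) / L ^ (K+1) := by ring
      have hpos : 0 ≤ b2 * x / L ^ (K+1) := le_of_lt (div_pos (mul_pos hb2pos hxpos) hP)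
      calc (1 - a / L₀ ^ (K+1)) * b2 * x / L ^ (K+1) * Q
          = ((1 - a / L₀ ^ (K+1)) * Q) * (b2 * x / L ^ (K+1)) := e1
        _ ≤ L * (b2 * x / L ^ (K+1)) := mul_le_mul_of_nonneg_right hB hpos
        _ = x * (L * b2) / L ^ (K+1) := e2
        _ ≤ ((primePi y : ℝ) - primePi x) * Q := hchain
    exact le_of_mul_le_mul_right hfinal hQpos
end

section
/- Let ξ ≥ 5 and, for j ≥ 2, let ξ_j > 1 be the unique real number with (ξ_j^j − ξ_j^{j−1})/log ξ_j = ξ/log ξ. Then ξ_j ≤ ξ^{1/j} for all j ≥ 2. -/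
/-!
Put `t = ξ ^ (1/j)`, so that `ξ / log ξ = t ^ j / (j log t)`. Since
`s ↦ (s ^ j - s ^ (j-1)) / log s` is increasing, `ξ_j ≤ t` follows once
`t ^ j / (j log t) ≤ (t ^ j - t ^ (j-1)) / log t`, i.e. once `t ≥ j / (j - 1)`, i.e. once
`ξ ≥ (1 + 1/(j-1)) ^ j`. The right side equals `4` for `j = 2` and is at most `e · 3/2 < 5`
for `j ≥ 3`.
-/

open Real Set

-- `(t - 1) / log t` is the reciprocal of the slope of the strictly concave `log` between `1` and `t`.
lemma strictMonoOn_sub_one_div_log : StrictMonoOn (fun t : ℝ => (t - 1) / log t) (Ioi 1) := by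
  intro x (hx : 1 < x) y (hy : 1 < y) hxy
  have hslope := strictConcaveOn_log_Ioi.secant_strict_mono (a := 1) (mem_Ioi.2 one_pos)
    (mem_Ioi.2 (zero_lt_one.trans hx)) (mem_Ioi.2 (zero_lt_one.trans hy)) hx.ne' hy.ne' hxy
  simp only [log_one, sub_zero] at hslope
  simpa only [one_div_div] using one_div_lt_one_div_of_lt (div_pos (log_pos hy) (by linarith)) hslope

lemma strictMonoOn_pow_succ_sub_pow_div_log (k : ℕ) :
    StrictMonoOn (fun t : ℝ => (t ^ (k + 1) - t ^ k) / log t) (Ioi 1) := by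
  intro x (hx : 1 < x) y (hy : 1 < y) hxy
  have hfactor : ∀ t : ℝ, (t ^ (k + 1) - t ^ k) / log t = t ^ k * ((t - 1) / log t) := fun t => by
    ring
  simp only [hfactor]
  exact mul_lt_mul_of_le_of_lt_of_nonneg_of_pos (pow_le_pow_left₀ (by linarith) hxy.le k)
    (strictMonoOn_sub_one_div_log hx hy hxy) (div_nonneg (by linarith) (log_nonneg hx.le))
    (pow_pos (by linarith) k)

lemma one_add_inv_pow_succ_le_five {k : ℕ} (hk : k ≠ 0) : (1 + (k : ℝ)⁻¹) ^ (k + 1) ≤ 5 := by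
  rcases eq_or_ne k 1 with rfl | hk1
  · norm_num
  have hinv : (k : ℝ)⁻¹ ≤ 1 / 2 := by
    rw [inv_le_comm₀ (by positivity) (by norm_num)]
    norm_num
    exact_mod_cast (by omega : 2 ≤ k)
  calc (1 + (k : ℝ)⁻¹) ^ (k + 1) = (1 + (k : ℝ)⁻¹) ^ k * (1 + (k : ℝ)⁻¹) := pow_succ _ _
    _ ≤ exp 1 * (1 + 1 / 2) := by gcongr; exact one_add_inv_pow_le_exp
    _ ≤ 5 := by linarith [exp_one_lt_d9]

lemma pow_succ_div_log_pow_succ_le {k : ℕ} (hk : k ≠ 0) {t : ℝ} (ht : 1 + (k : ℝ)⁻¹ ≤ t) :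
    t ^ (k + 1) / log (t ^ (k + 1)) ≤ (t ^ (k + 1) - t ^ k) / log t := by
  have hk0 : (0 : ℝ) < k := by positivity
  have ht1 : 1 < t := lt_of_lt_of_le (lt_add_of_pos_right 1 (inv_pos.mpr hk0)) ht
  have hlog : 0 < log t := log_pos ht1
  have hkt : (k : ℝ) + 1 ≤ k * t := by
    calc (k : ℝ) + 1 = k * (1 + (k : ℝ)⁻¹) := by field_simp
      _ ≤ k * t := by gcongr
  rw [log_pow, div_le_div_iff₀ (by positivity) hlog]
  push_cast
  have htk : 0 < t ^ k := pow_pos (by linarith) k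
  rw [pow_succ]
  nlinarith [mul_nonneg (mul_nonneg htk.le hlog.le) (sub_nonneg.2 hkt)]

theorem stmt8 (ξ : ℝ) (hξ : 5 ≤ ξ) (j : ℕ) (hj : 2 ≤ j) (ξj : ℝ) (hξj : 1 < ξj)
    (heq : (ξj ^ j - ξj ^ (j - 1)) / Real.log ξj = ξ / Real.log ξ) :
    ξj ≤ ξ ^ ((1 : ℝ) / j) := by
  obtain ⟨k, rfl⟩ : ∃ k, j = k + 1 := ⟨j - 1, by omega⟩
  have hk : k ≠ 0 := by omega
  rw [Nat.add_sub_cancel] at heq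
  set t := ξ ^ ((1 : ℝ) / (k + 1 : ℕ))
  have htpow : t ^ (k + 1) = ξ := by
    simp only [t, one_div]; exact rpow_inv_natCast_pow (by linarith) (Nat.succ_ne_zero k)
  have ht1 : 1 < t := by
    rw [← one_lt_pow_iff_of_nonneg (by positivity) (Nat.succ_ne_zero k), htpow]; linarith
  have hkt : 1 + (k : ℝ)⁻¹ ≤ t := by
    refine le_of_pow_le_pow_left₀ (Nat.succ_ne_zero k) (by positivity) ?_
    rw [htpow]; exact (one_add_inv_pow_succ_le_five hk).trans hξ
  have hle : (ξj ^ (k + 1) - ξj ^ k) / log ξj ≤ (t ^ (k + 1) - t ^ k) / log t := by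
    rw [heq, ← htpow]; exact pow_succ_div_log_pow_succ_le hk hkt
  exact ((strictMonoOn_pow_succ_sub_pow_div_log k).le_iff_le hξj ht1).mp hle
end

section
/- The function t ↦ √(li⁻¹(t)) is concave for t > li(e²), where li⁻¹ is the inverse of the logarithmic integral. -/
/-!
Differentiating `li (li⁻¹ t) = t` gives `(li⁻¹)' = log ∘ li⁻¹`, so
`(√li⁻¹)'(t) = φ (li⁻¹ t)` with `φ x = log x / (2 √x)`. The function `φ` decreases on `[e², ∞)`
and `li⁻¹` increases, hence `(√li⁻¹)'` decreases on `t > li(e²)`, where `li⁻¹ t > e²`.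
-/

open Real Set

section Inverse

variable {α β : Type*} {f : α → β} {g : β → α} {s : Set α}

theorem Set.LeftInvOn.apply_mem_of_surjOn (hinv : LeftInvOn g f s) (hsurj : SurjOn f s univ)
    (y : β) : g y ∈ s := by
  obtain ⟨x, hx, rfl⟩ := hsurj (mem_univ y)
  rwa [hinv hx]

theorem Set.LeftInvOn.rightInverse_of_surjOn (hinv : LeftInvOn g f s) (hsurj : SurjOn f s univ) :
    Function.RightInverse g f := by
  intro y
  obtain ⟨x, hx, rfl⟩ := hsurj (mem_univ y)
  rw [hinv hx]

theorem Set.LeftInvOn.range_eq_of_surjOn (hinv : LeftInvOn g f s) (hsurj : SurjOn f s univ) :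
    range g = s :=
  Subset.antisymm (range_subset_iff.2 (hinv.apply_mem_of_surjOn hsurj))
    fun x hx => ⟨f x, hinv hx⟩

theorem StrictMonoOn.strictMono_of_rightInverse [LinearOrder α] [Preorder β]
    (hf : StrictMonoOn f s) (hgs : ∀ y, g y ∈ s) (hfg : Function.RightInverse g f) :
    StrictMono g := fun a b hab =>
  (hf.lt_iff_lt (hgs a) (hgs b)).1 (by rwa [hfg a, hfg b])

theorem Monotone.continuous_of_isOpen_range [LinearOrder α] [TopologicalSpace α]
    [OrderTopology α] [LinearOrder β] [TopologicalSpace β] [OrderTopology β] [DenselyOrdered α]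
    (hg : Monotone g) (hrange : IsOpen (range g)) : Continuous g :=
  continuous_iff_continuousAt.2 fun y =>
    continuousAt_of_monotoneOn_of_image_mem_nhds (hg.monotoneOn univ) Filter.univ_mem
      (by rw [image_univ]; exact hrange.mem_nhds (mem_range_self y))

end Inverse

theorem strictMonoOn_of_hasDerivAt_pos {f f' : ℝ → ℝ} {s : Set ℝ} (hs : Convex ℝ s)
    (hf : ∀ x ∈ s, HasDerivAt f (f' x) x) (hpos : ∀ x ∈ s, 0 < f' x) : StrictMonoOn f s :=
  strictMonoOn_of_hasDerivWithinAt_pos hs (fun x hx => (hf x hx).continuousAt.continuousWithinAt)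
    (fun x hx => (hf x (interior_subset hx)).hasDerivWithinAt)
    fun x hx => hpos x (interior_subset hx)

theorem concaveOn_sqrt_of_hasDerivAt_log {g : ℝ → ℝ} {D : Set ℝ} (hD : Convex ℝ D)
    (hg : ∀ t ∈ D, HasDerivAt g (log (g t)) t) (hmono : MonotoneOn g D)
    (hge : ∀ t ∈ D, exp 2 ≤ g t) : ConcaveOn ℝ D fun t => √(g t) := by
  have hsqrt : ∀ t ∈ D, HasDerivAt (fun t => √(g t)) (log (g t) / √(g t) / 2) t := fun t ht =>
    ((hg t ht).sqrt ((exp_pos 2).trans_le (hge t ht)).ne').congr_deriv (by ring)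
  refine AntitoneOn.concaveOn_of_deriv hD
    (fun t ht => (hsqrt t ht).continuousAt.continuousWithinAt)
    (fun t ht => (hsqrt t (interior_subset ht)).differentiableAt.differentiableWithinAt) ?_
  intro a ha b hb hab
  rw [(hsqrt a (interior_subset ha)).deriv, (hsqrt b (interior_subset hb)).deriv]
  gcongr ?_ / 2
  exact log_div_sqrt_antitoneOn (hge a (interior_subset ha)) (hge b (interior_subset hb))
    (hmono (interior_subset ha) (interior_subset hb) hab)

theorem stmt11 (li liInv : ℝ → ℝ)
    (hderiv : ∀ x : ℝ, 1 < x → HasDerivAt li (1 / Real.log x) x)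
    (hbij : Set.BijOn li (Set.Ioi 1) Set.univ)
    (hinv : ∀ x : ℝ, 1 < x → liInv (li x) = x) :
    ConcaveOn ℝ (Set.Ioi (li (Real.exp 2))) (fun t => Real.sqrt (liInv t)) := by
  have hleft : LeftInvOn liInv li (Ioi 1) := hinv
  have hmem := hleft.apply_mem_of_surjOn hbij.surjOn
  have hright := hleft.rightInverse_of_surjOn hbij.surjOn
  have hmono : StrictMono liInv :=
    (strictMonoOn_of_hasDerivAt_pos (convex_Ioi 1) hderiv fun x hx =>
      one_div_pos.2 (log_pos hx)).strictMono_of_rightInverse hmem hright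
  have hcont : Continuous liInv := hmono.monotone.continuous_of_isOpen_range
    (hleft.range_eq_of_surjOn hbij.surjOn ▸ isOpen_Ioi)
  have hderivInv : ∀ t, HasDerivAt liInv (log (liInv t)) t := fun t => by
    simpa only [one_div, inv_inv] using (hderiv _ (hmem t)).of_local_left_inverse
      hcont.continuousAt (one_div_ne_zero (log_pos (hmem t)).ne')
      (Filter.Eventually.of_forall hright)
  refine concaveOn_sqrt_of_hasDerivAt_log (convex_Ioi _) (fun t _ => hderivInv t)
    (hmono.monotone.monotoneOn _) fun t ht => ?_
  calc exp 2 = liInv (li (exp 2)) := (hinv _ (one_lt_exp_iff.2 two_pos)).symm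
    _ ≤ liInv t := hmono.monotone ht.le
end

section
/- For any real u with 0 ≤ u ≤ e, the function Φ_u(t) = √(t log t) · (1 + (log log t − 1)/(2 log t) − u (log log t)²/(log t)²) is increasing and concave for t ≥ e^e. -/
/-!
Write `Φ_u(t) = √(t L) · G(L)` with `L = log t`, where `G = bracket u`. The chain rule gives
`Φ_u' = P(L) / (2√(t L))` and `Φ_u'' = (2L P'(L) - (L + 1) P(L)) / (4 t L √(t L))` with
`P(x) = (x + 1) G(x) + 2x G'(x)` (`P = derivNumer u`). Since `t ≥ e^e` means `L ≥ e`, it suffices that `P(x) > 0` and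
`2x P'(x) ≤ (x + 1) P(x)` for `x ≥ e`. After clearing denominators these are polynomial inequalities
in `x` and `M = log x`, and they follow from `1 ≤ M`, `e M ≤ x` (i.e. `log x ≤ x / e`) and
`0 ≤ u ≤ e`.
-/

open Real Set

section SqrtMulLog

variable {g : ℝ → ℝ} {g' t : ℝ}

lemma hasDerivAt_sqrt_mul_log_of_one_lt (ht : 1 < t) :
    HasDerivAt (fun y => √(y * log y)) ((log t + 1) / (2 * √(t * log t))) t := by
  have ht0 : 0 < t := one_pos.trans ht
  have hprod : HasDerivAt (fun y => y * log y) (log t + 1) t :=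
    ((hasDerivAt_id' t).mul (hasDerivAt_log ht0.ne')).congr_deriv (by field_simp)
  exact hprod.sqrt (mul_pos ht0 (log_pos ht)).ne'

lemma hasDerivAt_sqrt_mul_log_mul_comp_log (ht : 1 < t) (hg : HasDerivAt g g' (log t)) :
    HasDerivAt (fun y => √(y * log y) * g (log y))
      (((log t + 1) * g (log t) + 2 * log t * g') / (2 * √(t * log t))) t := by
  have ht0 : 0 < t := one_pos.trans ht
  have hL : 0 < log t := log_pos ht
  have hs : √(t * log t) ^ 2 = t * log t := sq_sqrt (mul_pos ht0 hL).le
  have hs0 : 0 < √(t * log t) := sqrt_pos.2 (mul_pos ht0 hL)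
  refine ((hasDerivAt_sqrt_mul_log_of_one_lt ht).mul
    (hg.comp t (hasDerivAt_log ht0.ne'))).congr_deriv ?_
  set s := √(t * log t)
  simp only [Function.comp_apply]
  field_simp
  rw [hs]
  ring

lemma hasDerivAt_comp_log_div_sqrt_mul_log (ht : 1 < t) (hg : HasDerivAt g g' (log t)) :
    HasDerivAt (fun y => g (log y) / (2 * √(y * log y)))
      ((2 * log t * g' - (log t + 1) * g (log t)) / (4 * (t * log t) * √(t * log t))) t := by
  have ht0 : 0 < t := one_pos.trans ht
  have hL : 0 < log t := log_pos ht
  have hs : √(t * log t) ^ 2 = t * log t := sq_sqrt (mul_pos ht0 hL).le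
  have hs0 : 0 < √(t * log t) := sqrt_pos.2 (mul_pos ht0 hL)
  refine ((hg.comp t (hasDerivAt_log ht0.ne')).div
    ((hasDerivAt_sqrt_mul_log_of_one_lt ht).const_mul 2) (by positivity)).congr_deriv ?_
  set s := √(t * log t)
  simp only [Function.comp_apply]
  field_simp
  rw [hs]
  field_simp
  ring

end SqrtMulLog

lemma exp_one_mul_log_le {x : ℝ} (hx : 0 < x) : exp 1 * log x ≤ x := by
  have h := add_one_le_exp (log x - 1)
  rw [exp_sub, exp_log hx, sub_add_cancel, le_div_iff₀ (exp_pos 1)] at h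
  linarith

namespace SqrtMulLogBracket

variable (u : ℝ) {x : ℝ}

noncomputable def bracket (x : ℝ) : ℝ :=
  1 + (log x - 1) / (2 * x) - u * log x ^ 2 / x ^ 2

noncomputable def bracketDeriv (x : ℝ) : ℝ :=
  (2 - log x) / (2 * x ^ 2) + 2 * u * (log x ^ 2 - log x) / x ^ 3

noncomputable def bracketDeriv2 (x : ℝ) : ℝ :=
  (2 * log x - 5) / (2 * x ^ 3) + 2 * u * (5 * log x - 1 - 3 * log x ^ 2) / x ^ 4

noncomputable def derivNumer (x : ℝ) : ℝ :=
  (x + 1) * bracket u x + 2 * x * bracketDeriv u x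

noncomputable def derivNumerDeriv (x : ℝ) : ℝ :=
  bracket u x + (x + 3) * bracketDeriv u x + 2 * x * bracketDeriv2 u x

lemma hasDerivAt_bracket (hx : x ≠ 0) : HasDerivAt (bracket u) (bracketDeriv u x) x := by
  have hlog := hasDerivAt_log hx
  refine ((((hlog.sub_const 1).div ((hasDerivAt_id' x).const_mul 2) (by simpa)).const_add 1).sub
    (((hlog.pow 2).const_mul u).div (hasDerivAt_pow 2 x) (by simpa))).congr_deriv ?_
  simp only [bracketDeriv, Pi.pow_apply]
  field_simp
  ring

lemma hasDerivAt_bracketDeriv (hx : x ≠ 0) :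
    HasDerivAt (bracketDeriv u) (bracketDeriv2 u x) x := by
  have hlog := hasDerivAt_log hx
  refine ((hlog.neg.const_add 2).div ((hasDerivAt_pow 2 x).const_mul 2) (by simpa) |>.add
    ((((hlog.pow 2).sub hlog).const_mul (2 * u)).div (hasDerivAt_pow 3 x) (by simpa))).congr_deriv ?_
  simp only [bracketDeriv2, Pi.pow_apply, Pi.sub_apply, Pi.neg_apply]
  field_simp
  ring

lemma hasDerivAt_derivNumer (hx : x ≠ 0) :
    HasDerivAt (derivNumer u) (derivNumerDeriv u x) x := by
  refine ((((hasDerivAt_id' x).add_const 1).mul (hasDerivAt_bracket u hx)).add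
    (((hasDerivAt_id' x).const_mul 2).mul (hasDerivAt_bracketDeriv u hx))).congr_deriv ?_
  simp only [derivNumerDeriv]
  ring

variable {u}

lemma one_le_log_and_le (hx : exp 1 ≤ x) : 1 ≤ log x ∧ 2.7182 * log x ≤ x := by
  have hx0 : 0 < x := (exp_pos 1).trans_le hx
  have hM : 1 ≤ log x := (le_log_iff_exp_le hx0).2 hx
  refine ⟨hM, ?_⟩
  nlinarith [exp_one_mul_log_le hx0, exp_one_gt_d9]

lemma derivNumer_pos (hu0 : 0 ≤ u) (hue : u ≤ exp 1) (hx : exp 1 ≤ x) :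
    0 < derivNumer u x := by
  obtain ⟨hM1, hMx⟩ := one_le_log_and_le hx
  have hue' : u ≤ 2.7183 := by linarith [exp_one_lt_d9]
  have hx' : 2.7182 ≤ x := by linarith
  have hx0 : 0 < x := by linarith
  set M := log x
  have key : derivNumer u x * (2 * x ^ 3) = 2 * x ^ 3 * (x + 1) + x ^ 2 * (x + 1) * (M - 1)
      + 2 * x ^ 2 * (2 - M) + u * (-2 * x * (x + 1) * M ^ 2 + 8 * x * M * (M - 1)) := by
    simp only [derivNumer, bracket, bracketDeriv]
    field_simp
    ring
  have hpoly : 0 < 2 * x ^ 3 * (x + 1) + x ^ 2 * (x + 1) * (M - 1) + 2 * x ^ 2 * (2 - M)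
      + u * (-2 * x * (x + 1) * M ^ 2 + 8 * x * M * (M - 1)) := by
    have hu : 0 ≤ 2.7183 - u := by linarith
    have hxM : 0 ≤ x - 2.7182 * M := by linarith
    have hM0 : 0 ≤ M := by linarith
    have hx1 : 0 ≤ x + 1 := by linarith
    nlinarith [mul_nonneg (mul_nonneg hu (mul_nonneg hx0.le hx1)) (sq_nonneg M),
      mul_nonneg hxM (mul_nonneg (mul_nonneg hx0.le hx1) hM0),
      mul_nonneg hxM (mul_nonneg hx0.le hx0.le),
      mul_nonneg hxM (mul_nonneg (mul_nonneg hx0.le hx0.le) hx0.le),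
      mul_nonneg (mul_nonneg hu0 (sub_nonneg.2 hM1)) (mul_nonneg hx0.le hM0),
      mul_nonneg (sub_nonneg.2 hx') (mul_nonneg (mul_nonneg hx0.le hx0.le) hx0.le)]
  rw [← key] at hpoly
  exact pos_of_mul_pos_left hpoly (by positivity)

lemma derivNumer_mul_le (hu0 : 0 ≤ u) (hue : u ≤ exp 1) (hx : exp 1 ≤ x) :
    2 * x * derivNumerDeriv u x ≤ (x + 1) * derivNumer u x := by
  obtain ⟨hM1, hMx⟩ := one_le_log_and_le hx
  have hue' : u ≤ 2.7183 := by linarith [exp_one_lt_d9]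
  have hx' : 2.7182 ≤ x := by linarith
  have hx0 : 0 < x := by linarith
  set M := log x
  have key : ((x + 1) * derivNumer u x - 2 * x * derivNumerDeriv u x) * (2 * x ^ 2) =
      2 * x ^ 4 + (4 - 2 * M) * x ^ 2 + x * (x + 1) ^ 2 * (M - 1) + (12 - 4 * M) * x
      + 2 * u * (-(x + 1) ^ 2 * M ^ 2 + 4 * (x + 1) * M * (M - 1) + 2 * x * (2 * M - M ^ 2)
        + 4 * M - 4 * M ^ 2 + 16 * M ^ 2 - 32 * M + 8) := by
    simp only [derivNumer, derivNumerDeriv, bracket, bracketDeriv, bracketDeriv2]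
    field_simp
    ring
  have hpoly : 0 ≤ 2 * x ^ 4 + (4 - 2 * M) * x ^ 2 + x * (x + 1) ^ 2 * (M - 1) + (12 - 4 * M) * x
      + 2 * u * (-(x + 1) ^ 2 * M ^ 2 + 4 * (x + 1) * M * (M - 1) + 2 * x * (2 * M - M ^ 2)
        + 4 * M - 4 * M ^ 2 + 16 * M ^ 2 - 32 * M + 8) := by
    have hu : 0 ≤ 2.7183 - u := by linarith
    have hxM : 0 ≤ x - 2.7182 * M := by linarith
    have hM0 : 0 ≤ M := by linarith
    have hx1 : 0 ≤ x + 1 := by linarith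
    nlinarith [mul_nonneg (mul_nonneg hu (sq_nonneg (x + 1))) (sq_nonneg M),
      mul_nonneg hxM (mul_nonneg (sq_nonneg (x + 1)) hM0),
      mul_nonneg hxM (mul_nonneg (mul_nonneg hx0.le hx0.le) hx0.le),
      mul_nonneg hxM (mul_nonneg hx0.le hx0.le),
      mul_nonneg (mul_nonneg hu0 (sub_nonneg.2 hM1)) (mul_nonneg hx1 hM0),
      mul_nonneg (mul_nonneg hu0 (sub_nonneg.2 hM1)) hx0.le,
      mul_nonneg (sub_nonneg.2 hx') (mul_nonneg (mul_nonneg hx0.le hx0.le) hx0.le),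
      mul_nonneg hu0 (mul_nonneg hx0.le hM0)]
  rw [← key] at hpoly
  have := nonneg_of_mul_nonneg_left hpoly (by positivity)
  linarith

end SqrtMulLogBracket

open SqrtMulLogBracket in
theorem stmt13 (u : ℝ) (hu0 : 0 ≤ u) (hue : u ≤ Real.exp 1) :
    StrictMonoOn
      (fun t : ℝ => Real.sqrt (t * Real.log t) *
        (1 + (Real.log (Real.log t) - 1) / (2 * Real.log t)
          - u * Real.log (Real.log t) ^ 2 / Real.log t ^ 2))
      (Set.Ici (Real.exp (Real.exp 1))) ∧
    ConcaveOn ℝ (Set.Ici (Real.exp (Real.exp 1)))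
      (fun t : ℝ => Real.sqrt (t * Real.log t) *
        (1 + (Real.log (Real.log t) - 1) / (2 * Real.log t)
          - u * Real.log (Real.log t) ^ 2 / Real.log t ^ 2)) := by
  set D := Ici (exp (exp 1))
  set Φ : ℝ → ℝ := fun t => √(t * log t) * bracket u (log t)
  set Φ' : ℝ → ℝ := fun t => derivNumer u (log t) / (2 * √(t * log t))
  have hD : ∀ t ∈ D, 1 < t ∧ exp 1 ≤ log t := fun t ht =>
    ⟨(one_lt_exp_iff.2 (exp_pos 1)).trans_le ht, (le_log_iff_exp_le ((exp_pos _).trans_le ht)).2 ht⟩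
  have hlog_ne : ∀ t ∈ D, log t ≠ 0 := fun t ht => (log_pos (hD t ht).1).ne'
  have hΦ : ∀ t ∈ D, HasDerivAt Φ (Φ' t) t := fun t ht =>
    hasDerivAt_sqrt_mul_log_mul_comp_log (hD t ht).1 (hasDerivAt_bracket u (hlog_ne t ht))
  have hΦ' : ∀ t ∈ D, HasDerivAt Φ' _ t := fun t ht =>
    hasDerivAt_comp_log_div_sqrt_mul_log (hD t ht).1 (hasDerivAt_derivNumer u (hlog_ne t ht))
  have hcont : ContinuousOn Φ D := fun t ht => (hΦ t ht).continuousAt.continuousWithinAt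
  refine ⟨strictMonoOn_of_hasDerivWithinAt_pos (convex_Ici _) hcont
      (fun t ht => (hΦ t (interior_subset ht)).hasDerivWithinAt) fun t ht => ?_,
    concaveOn_of_hasDerivWithinAt2_nonpos (convex_Ici _) hcont
      (fun t ht => (hΦ t (interior_subset ht)).hasDerivWithinAt)
      (fun t ht => (hΦ' t (interior_subset ht)).hasDerivWithinAt) fun t ht => ?_⟩
  all_goals
    obtain ⟨ht1, hlog⟩ := hD t (interior_subset ht)
    have htlog : 0 < t * log t := mul_pos (one_pos.trans ht1) (log_pos ht1)
  · exact div_pos (derivNumer_pos hu0 hue hlog) (by positivity [sqrt_pos.2 htlog])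
  · exact div_nonpos_of_nonpos_of_nonneg (sub_nonpos.2 (derivNumer_mul_le hu0 hue hlog))
      (by positivity)
end

section
/- Let N' < N'' be two consecutive ℓ-superchampion numbers associated to the same parameter ρ, with n' = ℓ(N'), n'' = ℓ(N''). Let Φ be a concave function on [n', n''] with log N' ≤ Φ(n') and log N'' ≤ Φ(n''). Then log g(n) ≤ Φ(n) for all integers n ∈ [n', n'']. -/
/-- The additive function with `ℓ(p^α) = p^α` and `ℓ(1) = 0`. -/
def ell (M : ℕ) : ℕ := ∑ p ∈ M.primeFactors, p ^ (M.factorization p)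

/-- `N` is an `ℓ`-superchampion number associated to the parameter `ρ`. -/
def IsSuperchampion (N : ℕ) (ρ : ℝ) : Prop :=
  1 ≤ N ∧ ∀ M : ℕ, 1 ≤ M →
    (ell N : ℝ) - ρ * Real.log N ≤ (ell M : ℝ) - ρ * Real.log M

/-! For `ℓ(M) ≤ n`, the superchampion inequality for `N'` bounds `log M` by the value at `n` of
the line of slope `1/ρ` through `(ℓ(N'), log N')` (comparing with `M = 1` shows `ρ > 0`); since `N''` is a superchampion for the same `ρ`,
this line also passes through `(ℓ(N''), log N'')`, so a concave `Φ` above both endpoints lies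
above it on the whole interval. -/

open Set

lemma ConcaveOn.affine_le_of_endpoints {Φ : ℝ → ℝ} {a b x y s : ℝ} (hΦ : ConcaveOn ℝ (Icc a b) Φ)
    (ha : y ≤ Φ a) (hb : y + s * (b - a) ≤ Φ b) (hx : x ∈ Icc a b) :
    y + s * (x - a) ≤ Φ x := by
  have hab : a ≤ b := hx.1.trans hx.2
  have haffine : ConvexOn ℝ (Icc a b) fun t => y + s * (t - a) :=
    ⟨convex_Icc a b, fun u _ v _ p q _ _ hpq => le_of_eq <| by
      simp only [smul_eq_mul]; linear_combination (s * a - y) * hpq⟩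
  have hmin := (hΦ.sub haffine).min_le_of_mem_Icc (left_mem_Icc.2 hab) (right_mem_Icc.2 hab) hx
  simp only [Pi.sub_apply, sub_self, mul_zero, add_zero] at hmin
  linarith [(le_min (sub_nonneg.2 ha) (sub_nonneg.2 hb)).trans hmin]

lemma ell_one : ell 1 = 0 := by simp [ell]

lemma ell_pos {M : ℕ} (hM : 1 < M) : 0 < ell M := by
  obtain ⟨p, hp, hpM⟩ := Nat.exists_prime_and_dvd hM.ne'
  have hmem : p ∈ M.primeFactors := Nat.mem_primeFactors.2 ⟨hp, hpM, by omega⟩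
  exact Finset.sum_pos' (fun _ _ => Nat.zero_le _) ⟨p, hmem, pow_pos hp.pos _⟩

namespace IsSuperchampion

variable {N N' : ℕ} {ρ : ℝ}

lemma pos_of_one_lt (hN : IsSuperchampion N ρ) (h1N : 1 < N) : 0 < ρ := by
  by_contra! hρ
  have hcmp := hN.2 1 le_rfl
  have hlog : 0 < Real.log N := Real.log_pos (by exact_mod_cast h1N)
  have hell : (0 : ℝ) < ell N := by exact_mod_cast ell_pos h1N
  simp only [ell_one, Nat.cast_one, Real.log_one, CharP.cast_eq_zero, mul_zero, sub_zero] at hcmp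
  nlinarith

lemma level_eq (hN : IsSuperchampion N ρ) (hN' : IsSuperchampion N' ρ) :
    (ell N : ℝ) - ρ * Real.log N = ell N' - ρ * Real.log N' :=
  le_antisymm (hN.2 N' hN'.1) (hN'.2 N hN.1)

lemma log_le (hN : IsSuperchampion N ρ) (hρ : 0 < ρ) {M : ℕ} (hM : 1 ≤ M) :
    Real.log M ≤ Real.log N + ρ⁻¹ * ((ell M : ℝ) - ell N) := by
  have hcmp := hN.2 M hM
  rw [← sub_nonneg]
  have : Real.log N + ρ⁻¹ * ((ell M : ℝ) - ell N) - Real.log M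
      = ρ⁻¹ * ((ell M : ℝ) - ρ * Real.log M - (ell N - ρ * Real.log N)) := by
    field_simp
    ring
  rw [this]
  exact mul_nonneg (inv_nonneg.2 hρ.le) (sub_nonneg.2 hcmp)

end IsSuperchampion

theorem stmt14_general (g : ℕ → ℕ)
    (hg : ∀ n, IsGreatest {M : ℕ | 1 ≤ M ∧ ell M ≤ n} (g n))
    (ρ : ℝ) (N' N'' : ℕ) (hlt : N' < N'')
    (h1 : IsSuperchampion N' ρ) (h2 : IsSuperchampion N'' ρ)
    (Φ : ℝ → ℝ) (hΦ : ConcaveOn ℝ (Set.Icc (ell N' : ℝ) (ell N'')) Φ)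
    (hN' : Real.log N' ≤ Φ (ell N')) (hN'' : Real.log N'' ≤ Φ (ell N'')) :
    ∀ n : ℕ, ell N' ≤ n → n ≤ ell N'' → Real.log (g n) ≤ Φ n := by
  intro n hn' hn''
  obtain ⟨hg1, hgn⟩ := (hg n).1
  have hρ : 0 < ρ := h2.pos_of_one_lt (h1.1.trans_lt hlt)
  have hline : Real.log N' + ρ⁻¹ * ((ell N'' : ℝ) - ell N') = Real.log N'' := by
    field_simp
    linarith [h1.level_eq h2]
  have hgn' : (ell (g n) : ℝ) ≤ n := by exact_mod_cast hgn
  calc Real.log (g n) ≤ Real.log N' + ρ⁻¹ * ((ell (g n) : ℝ) - ell N') := h1.log_le hρ hg1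
    _ ≤ Real.log N' + ρ⁻¹ * ((n : ℝ) - ell N') := by gcongr
    _ ≤ Φ n := hΦ.affine_le_of_endpoints hN' (hline ▸ hN'') ⟨by exact_mod_cast hn', by exact_mod_cast hn''⟩

theorem stmt14 (g : ℕ → ℕ)
    (hg : ∀ n, IsGreatest {M : ℕ | 1 ≤ M ∧ ell M ≤ n} (g n))
    (ρ : ℝ) (N' N'' : ℕ) (hlt : N' < N'')
    (h1 : IsSuperchampion N' ρ) (h2 : IsSuperchampion N'' ρ)
    (hconsec : ∀ M : ℕ, N' < M → M < N'' → ¬ ∃ σ : ℝ, IsSuperchampion M σ)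
    (Φ : ℝ → ℝ) (hΦ : ConcaveOn ℝ (Set.Icc (ell N' : ℝ) (ell N'')) Φ)
    (hN' : Real.log N' ≤ Φ (ell N')) (hN'' : Real.log N'' ≤ Φ (ell N'')) :
    ∀ n : ℕ, ell N' ≤ n → n ≤ ell N'' → Real.log (g n) ≤ Φ n :=
  stmt14_general g hg ρ N' N'' hlt h1 h2 Φ hΦ hN' hN''
end

section
/- For all ξ ≥ 31643, the root ξ₂ of (t² − t)/log t = ξ/log ξ with t > 1 satisfies ξ₂ < √(ξ/2) · (1 − (log 2)/(2 log ξ)). -/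
/-!
Since `t ↦ (t² - t) / log t` is strictly increasing on `(1, ∞)`, it suffices to show that `Φ`
overshoots the equation: `ξ log Φ < (Φ² - Φ) log ξ`. Writing `L = log ξ` and `ε = log 2 / (2L)`,
so that `Φ² = (ξ/2)(1 - ε)²` and `log Φ = (L - log 2)/2 + log (1 - ε)`, this becomes
`Φ L < ξ (ε² L / 2 - log (1 - ε))`. The margin at `ξ = 31643` is a relative `10⁻⁵`, so
`-log (1 - ε)` is bounded below by four terms of its series, `√ξ = exp (L/2)` by a cubic in `L`
anchored at `log 31643`, and what remains is a polynomial inequality in `L`.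
-/

open Real Set Finset

theorem sub_one_div_log_lt_sub_one_div_log {a b : ℝ} (ha : 1 < a) (hab : a < b) :
    (a - 1) / log a < (b - 1) / log b := by
  have hb : 1 < b := ha.trans hab
  have hslope := strictConcaveOn_log_Ioi.secant_strict_mono (a := 1) (mem_Ioi.2 one_pos)
    (mem_Ioi.2 (one_pos.trans ha)) (mem_Ioi.2 (one_pos.trans hb)) ha.ne' hb.ne' hab
  rw [log_one, sub_zero, sub_zero, div_lt_div_iff₀ (by linarith) (by linarith)] at hslope
  rw [div_lt_div_iff₀ (log_pos ha) (log_pos hb)]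
  linarith

theorem strictMonoOn_sq_sub_div_log :
    StrictMonoOn (fun t : ℝ => (t ^ 2 - t) / log t) (Ioi 1) := by
  intro a (ha : 1 < a) b (hb : 1 < b) hab
  have hfactor (t : ℝ) : (t ^ 2 - t) / log t = t * ((t - 1) / log t) := by ring
  have key : a * ((a - 1) / log a) < b * ((b - 1) / log b) :=
    mul_lt_mul'' hab (sub_one_div_log_lt_sub_one_div_log ha hab) (by linarith)
      (div_nonneg (by linarith) (log_nonneg ha.le))
  simpa only [hfactor] using key

theorem sum_range_le_neg_log_one_sub {x : ℝ} (h₀ : 0 ≤ x) (h : x < 1) (n : ℕ) :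
    ∑ i ∈ range n, x ^ (i + 1) / (i + 1) ≤ -log (1 - x) :=
  sum_le_hasSum _ (fun i _ => by positivity)
    (hasSum_pow_div_log_of_abs_lt_one (by rwa [abs_of_nonneg h₀]))

theorem log_31643_mem_Icc : log 31643 ∈ Icc (10.36227 : ℝ) 10.3622733 := by
  set x : ℝ := 1125 / 32768
  have hlog : log 31643 = 15 * log 2 + log (1 - x) := by
    rw [show (31643 : ℝ) = 2 ^ 15 * (1 - x) by norm_num [x],
      log_mul (by positivity) (by norm_num [x]), log_pow]
    norm_num
  have hsum : ∑ i ∈ range 4, x ^ (i + 1) / (i + 1) = x + x ^ 2 / 2 + x ^ 3 / 3 + x ^ 4 / 4 := by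
    simp only [sum_range_succ, sum_range_zero]
    norm_num
  have hlower := abs_le.1 (abs_log_sub_add_sum_range_le (x := x) (by norm_num [x]) 4)
  have hupper := sum_range_le_neg_log_one_sub (x := x) (by norm_num [x]) (by norm_num [x]) 4
  rw [hsum] at hlower hupper
  have := log_two_gt_d9
  have := log_two_lt_d9
  rw [hlog]
  norm_num [x] at hlower hupper ⊢
  constructor <;> linarith

theorem le_log_of_31643_le {ξ : ℝ} (hξ : 31643 ≤ ξ) : 10.36227 ≤ log ξ :=
  log_31643_mem_Icc.1.trans (log_le_log (by norm_num) hξ)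

theorem cubic_le_sqrt_of_31643_le {ξ : ℝ} (hξ : 31643 ≤ ξ) :
    177.8845 * (1 + (log ξ - 10.36227) / 6) ^ 3 ≤ √ξ := by
  have hL := le_log_of_31643_le hξ
  have hup := log_31643_mem_Icc.2
  have hexp : 31643 * (1 + (10.36227 - log 31643)) ≤ exp 10.36227 :=
    calc 31643 * (1 + (10.36227 - log 31643)) ≤ 31643 * exp (10.36227 - log 31643) := by
          gcongr; linarith [add_one_le_exp (10.36227 - log 31643)]
      _ = exp 10.36227 := by rw [exp_sub, exp_log (by norm_num)]; field_simp
  have hbase : 177.8845 ≤ exp (10.36227 / 2) := by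
    refine le_of_pow_le_pow_left₀ two_ne_zero (exp_pos _).le ?_
    rw [← exp_nat_mul]
    norm_num at hexp ⊢
    linarith
  have hcube : (1 + (log ξ - 10.36227) / 6) ^ 3 ≤ exp ((log ξ - 10.36227) / 2) := by
    convert one_sub_div_pow_le_exp_neg (n := 3) (t := -((log ξ - 10.36227) / 2))
      (by push_cast; linarith) using 2 <;> ring
  calc 177.8845 * (1 + (log ξ - 10.36227) / 6) ^ 3
      ≤ exp (10.36227 / 2) * exp ((log ξ - 10.36227) / 2) :=
        mul_le_mul hbase hcube (by positivity) (exp_pos _).le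
    _ = √ξ := by
      rw [← exp_add, sqrt_eq_rpow, rpow_def_of_pos (by linarith)]
      ring_nf

theorem sub_half_mul_pow_four_lt {L l s : ℝ} (hL : 10.36227 ≤ L) (hl : 0.693147 ≤ l)
    (hs : 177.8845 * (1 + (L - 10.36227) / 6) ^ 3 ≤ s) :
    (L - l / 2) * L ^ 4 < √2 * s *
      ((l / 2 + l ^ 2 / 8) * L ^ 3 + l ^ 2 / 8 * L ^ 2 + l ^ 3 / 24 * L + l ^ 4 / 64) := by
  have hsqrt2 : 1.414213 ≤ √2 := (le_sqrt (by norm_num) (by norm_num)).2 (by norm_num)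
  have hcube : 0 ≤ 1 + (L - 10.36227) / 6 := by linarith
  have hs0 : 0 ≤ s := le_trans (by positivity) hs
  -- with `u = L - 10.36227 ≥ 0`, the difference of the two sides has positive coefficients in `u`
  have hpoly : (L - 0.693147 / 2) * L ^ 4
      < 1.414213 * (177.8845 * (1 + (L - 10.36227) / 6) ^ 3) *
        ((0.693147 / 2 + 0.693147 ^ 2 / 8) * L ^ 3 + 0.693147 ^ 2 / 8 * L ^ 2
          + 0.693147 ^ 3 / 24 * L + 0.693147 ^ 4 / 64) := by
    obtain ⟨u, hu, rfl⟩ : ∃ u, 0 ≤ u ∧ L = 10.36227 + u := ⟨L - 10.36227, by linarith, by ring⟩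
    ring_nf
    nlinarith [pow_nonneg hu 2, pow_nonneg hu 3, pow_nonneg hu 4, pow_nonneg hu 5, pow_nonneg hu 6]
  calc (L - l / 2) * L ^ 4 ≤ (L - 0.693147 / 2) * L ^ 4 := by gcongr
    _ < _ := hpoly
    _ ≤ _ := by gcongr

noncomputable def Φ (ξ : ℝ) : ℝ := √(ξ / 2) * (1 - log 2 / (2 * log ξ))

theorem Φ_mul_log_lt {ξ ε : ℝ} (hξ : 31643 ≤ ξ) (hε : ε = log 2 / (2 * log ξ)) :
    Φ ξ * log ξ < ξ * (ε ^ 2 * log ξ / 2 + ∑ i ∈ range 4, ε ^ (i + 1) / (i + 1)) := by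
  have hL := le_log_of_31643_le hξ
  have key := sub_half_mul_pow_four_lt (l := log 2) hL (by linarith [log_two_gt_d9])
    (cubic_le_sqrt_of_31643_le hξ)
  have hs : 0 < √ξ := sqrt_pos.2 (by linarith)
  have hξs : ξ = √ξ ^ 2 := (sq_sqrt (by linarith)).symm
  rw [Φ, sqrt_div' _ zero_le_two, hε]
  simp only [sum_range_succ, sum_range_zero]
  push_cast
  generalize log ξ = L at hL key ⊢
  generalize log 2 = l at key ⊢
  generalize √ξ = s at hs hξs key ⊢
  subst hξs
  have hL0 : 0 < L := by linarith
  calc _ = s / (√2 * L ^ 4) * ((L - l / 2) * L ^ 4) := by field_simp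
    _ < _ := mul_lt_mul_of_pos_left key (by positivity)
    _ = _ := by field_simp; ring

theorem one_lt_Φ {ξ : ℝ} (hξ : 31643 ≤ ξ) : 1 < Φ ξ := by
  have hL := le_log_of_31643_le hξ
  have hsqrt : 125 ≤ √(ξ / 2) := (le_sqrt (by norm_num) (by positivity)).2 (by linarith)
  have hε : log 2 / (2 * log ξ) ≤ 1 / 26 := by
    rw [div_le_iff₀ (by positivity)]
    linarith [log_two_lt_d9]
  calc (1 : ℝ) < 125 * (1 - 1 / 26) := by norm_num
    _ ≤ Φ ξ := by unfold Φ; gcongr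

theorem mul_log_Φ_lt {ξ : ℝ} (hξ : 31643 ≤ ξ) : ξ * log (Φ ξ) < (Φ ξ ^ 2 - Φ ξ) * log ξ := by
  have hξ0 : 0 < ξ := by linarith
  have hL := le_log_of_31643_le hξ
  set ε := log 2 / (2 * log ξ) with hε
  have hε0 : 0 ≤ ε := by positivity
  have hε1 : ε < 1 := by
    rw [hε, div_lt_one (by positivity)]
    linarith [log_two_lt_d9]
  have hεL : ε * log ξ = log 2 / 2 := by rw [hε]; field_simp
  have hΦsq : Φ ξ ^ 2 = ξ / 2 * (1 - ε) ^ 2 := by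
    rw [Φ, mul_pow, sq_sqrt (by positivity)]
  have hlogΦ : log (Φ ξ) = (log ξ - log 2) / 2 + log (1 - ε) := by
    rw [Φ, log_mul (by positivity) (by linarith), log_sqrt (by positivity),
      log_div hξ0.ne' two_ne_zero]
  set S := ∑ i ∈ range 4, ε ^ (i + 1) / (i + 1)
  calc ξ * log (Φ ξ) = ξ * ((log ξ - log 2) / 2) + ξ * log (1 - ε) := by rw [hlogΦ]; ring
    _ ≤ ξ * ((log ξ - log 2) / 2) - ξ * S := by
      linarith [mul_le_mul_of_nonneg_left (sum_range_le_neg_log_one_sub hε0 hε1 4) hξ0.le]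
    _ < ξ * ((log ξ - log 2) / 2) - ξ * S + (ξ * (ε ^ 2 * log ξ / 2 + S) - Φ ξ * log ξ) := by
      linarith [Φ_mul_log_lt hξ hε]
    _ = (Φ ξ ^ 2 - Φ ξ) * log ξ := by
      rw [sub_mul, hΦsq]
      linear_combination ξ * hεL

theorem stmt15 (ξ ξ₂ : ℝ) (hξ : 31643 ≤ ξ) (hξ₂ : 1 < ξ₂)
    (heq : (ξ₂ ^ 2 - ξ₂) / Real.log ξ₂ = ξ / Real.log ξ) :
    ξ₂ < Real.sqrt (ξ / 2) * (1 - Real.log 2 / (2 * Real.log ξ)) := by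
  have hΦ := one_lt_Φ hξ
  have hlt : ξ / log ξ < (Φ ξ ^ 2 - Φ ξ) / log (Φ ξ) :=
    (div_lt_div_iff₀ (log_pos (by linarith)) (log_pos hΦ)).2 (mul_log_Φ_lt hξ)
  exact (strictMonoOn_sq_sub_div_log.lt_iff_lt hξ₂ hΦ).1 (heq.trans_lt hlt)
end

section
/- For all ξ ≥ 4, the root ξ₂ of (t² − t)/log t = ξ/log ξ with t > 1 satisfies ξ₂ > √(ξ/2) · (1 − 0.371/log ξ). -/
/-!
Since `t ↦ (t² - t) / log t` is strictly increasing on `(1, ∞)`, it suffices to show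
`(Φ² - Φ) / log Φ < ξ / log ξ` for `Φ = √(ξ/2) (1 - c / log ξ)`, `c = 0.371`. Expanding `log Φ`
turns this into `√(2ξ) · defect c L < L - c` with `L = log ξ`, where `defect c` is decreasing and
negative for `L ≳ 18.3`. On `[1.386, 18.3]` the inequality is tight (margin about 10% near
`L = 16`), so this range is cut into short intervals `[a, b]` on which `defect c L ≤ defect c a`,
`L - c ≥ a - c` and `ξ ≤ exp b`, leaving one rational inequality per interval.
-/

open Real Set

namespace SqrtHalfBound

theorem strictMonoOn_sub_div_log : StrictMonoOn (fun t : ℝ => (t ^ 2 - t) / log t) (Ioi 1) := by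
  have hderiv : ∀ x ∈ Ioi (1 : ℝ), HasDerivAt (fun t : ℝ => (t ^ 2 - t) / log t)
      (((2 * x - 1) * log x - (x ^ 2 - x) * x⁻¹) / log x ^ 2) x := by
    intro x hx
    have hpoly : HasDerivAt (fun t : ℝ => t ^ 2 - t) (2 * x - 1) x :=
      ((hasDerivAt_pow 2 x).sub (hasDerivAt_id' x)).congr_deriv (by norm_num)
    exact hpoly.div (hasDerivAt_log (by linarith [mem_Ioi.mp hx])) (log_pos hx).ne'
  refine strictMonoOn_of_deriv_pos (convex_Ioi 1)
    (fun x hx => (hderiv x hx).continuousAt.continuousWithinAt) fun x hx => ?_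
  rw [interior_Ioi] at hx
  have hx1 : 1 < x := hx
  rw [(hderiv x hx).deriv]
  have hlog : 1 - x⁻¹ ≤ log x := one_sub_inv_le_log_of_pos (by linarith)
  have hx' : (x ^ 2 - x) * x⁻¹ = x - 1 := by field_simp
  have h1 : 1 - x⁻¹ = (x - 1) / x := by field_simp
  have hnum : x - 1 < (2 * x - 1) * (1 - x⁻¹) := by
    rw [h1, mul_div_assoc', lt_div_iff₀ (by linarith)]
    nlinarith
  have : 0 < (2 * x - 1) * log x - (x ^ 2 - x) * x⁻¹ := by
    rw [hx']
    nlinarith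
  exact div_pos this (pow_pos (log_pos hx1) 2)

/-- For `Φ = √(ξ/2) (1 - c / log ξ)` one has
`ξ log Φ - (Φ² - Φ) log ξ = Φ log ξ - ξ · defect c (log ξ)`. -/
noncomputable def defect (c L : ℝ) : ℝ :=
  log 2 / 2 - c + c ^ 2 / (2 * L) - log (1 - c / L)

theorem sub_div_log_lt_of_mul_defect_lt {c ξ Φ : ℝ} (hξ : 1 < ξ)
    (hΦ : Φ = √(ξ / 2) * (1 - c / log ξ)) (hΦ1 : 1 < Φ)
    (h : ξ * defect c (log ξ) < √(ξ / 2) * (log ξ - c)) :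
    (Φ ^ 2 - Φ) / log Φ < ξ / log ξ := by
  set L := log ξ
  have hL : 0 < L := log_pos hξ
  have hs : 0 < √(ξ / 2) := sqrt_pos.mpr (by linarith)
  have hd : 0 < 1 - c / L := pos_of_mul_pos_right (hΦ ▸ zero_lt_one.trans hΦ1) hs.le
  have hlogΦ : log Φ = (L - log 2) / 2 + log (1 - c / L) := by
    rw [hΦ, log_mul hs.ne' hd.ne', log_sqrt (by linarith), log_div (by linarith) two_ne_zero]
  have hΦsq : Φ ^ 2 = ξ / 2 * (1 - c / L) ^ 2 := by
    rw [hΦ, mul_pow, sq_sqrt (by linarith)]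
  rw [div_lt_div_iff₀ (log_pos hΦ1) hL, hlogΦ, hΦsq]
  have key : ξ * ((L - log 2) / 2 + log (1 - c / L)) - (ξ / 2 * (1 - c / L) ^ 2 - Φ) * L
      = √(ξ / 2) * (L - c) - ξ * defect c L := by
    rw [hΦ, defect]
    field_simp
    ring
  linarith

theorem defect_antitoneOn {c : ℝ} (hc : 0 ≤ c) : AntitoneOn (defect c) (Ioi c) := by
  intro a ha L _ haL
  have ha0 : 0 < a := hc.trans_lt ha
  have hca : c / L ≤ c / a := div_le_div_of_nonneg_left hc ha0 haL
  have hpos : 0 < 1 - c / a := by rw [sub_pos, div_lt_one ha0]; exact ha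
  have hlog : log (1 - c / a) ≤ log (1 - c / L) := log_le_log hpos (by linarith)
  have hsq : c ^ 2 / (2 * L) ≤ c ^ 2 / (2 * a) := by gcongr
  unfold defect
  linarith

theorem neg_log_one_sub_le {x : ℝ} (hx0 : 0 ≤ x) (hx1 : x < 1) :
    -log (1 - x) ≤ x + x ^ 2 / 2 + x ^ 3 / (1 - x) := by
  have h := abs_log_sub_add_sum_range_le (show |x| < 1 by rwa [abs_of_nonneg hx0]) 2
  rw [abs_of_nonneg hx0] at h
  norm_num [Finset.sum_range_succ] at h
  linarith [(abs_le.mp h).1]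

noncomputable def defectUpper (c a : ℝ) : ℝ :=
  0.6931471808 / 2 - c + c ^ 2 / (2 * a) + c / a + (c / a) ^ 2 / 2 + (c / a) ^ 3 / (1 - c / a)

theorem defect_le_defectUpper {c a : ℝ} (hc : 0 ≤ c) (ha : c < a) :
    defect c a ≤ defectUpper c a := by
  have ha0 : 0 < a := hc.trans_lt ha
  have hlog := neg_log_one_sub_le (div_nonneg hc ha0.le) ((div_lt_one ha0).mpr ha)
  unfold defect defectUpper
  linarith [log_two_lt_d9]

theorem mul_defect_lt_of_nonpos {c ξ : ℝ} (hξ : 0 < ξ) (hc : c < log ξ)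
    (hD : defect c (log ξ) ≤ 0) : ξ * defect c (log ξ) < √(ξ / 2) * (log ξ - c) := by
  have : 0 < √(ξ / 2) * (log ξ - c) := mul_pos (sqrt_pos.mpr (by positivity)) (by linarith)
  nlinarith

theorem mul_defect_lt_of_log_mem_Icc {c ξ a b E : ℝ} (hξ : 0 < ξ) (hc : 0 ≤ c) (ha : c < a)
    (hL : log ξ ∈ Icc a b) (hE : exp b ≤ E) (hcert : 2 * E * defectUpper c a ^ 2 < (a - c) ^ 2) :
    ξ * defect c (log ξ) < √(ξ / 2) * (log ξ - c) := by
  set L := log ξ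
  rcases le_or_gt (defect c L) 0 with hD | hD
  · exact mul_defect_lt_of_nonpos hξ (ha.trans_le hL.1) hD
  have hDa : defect c L ≤ defectUpper c a :=
    (defect_antitoneOn hc ha (ha.trans_le hL.1) hL.1).trans (defect_le_defectUpper hc ha)
  have hξE : ξ ≤ E := calc
    ξ = exp L := (exp_log hξ).symm
    _ ≤ exp b := exp_le_exp.mpr hL.2
    _ ≤ E := hE
  have hsq : 2 * ξ * defect c L ^ 2 < (L - c) ^ 2 := calc
    2 * ξ * defect c L ^ 2 ≤ 2 * E * defectUpper c a ^ 2 := by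
      have : 0 ≤ 2 * E := by linarith
      gcongr
    _ < (a - c) ^ 2 := hcert
    _ ≤ (L - c) ^ 2 := by gcongr; exact hL.1
  refine lt_of_pow_lt_pow_left₀ 2 (mul_nonneg (sqrt_nonneg _) (by linarith [hL.1])) ?_
  rw [mul_pow, mul_pow, sq_sqrt (by positivity)]
  nlinarith

/-- Writing `k = N q + r` keeps the exponents small: `norm_num` does not evaluate powers with
exponent above 256. -/
noncomputable def expUpper (u : ℝ) (N k : ℕ) : ℝ :=
  2.7182818286 ^ (k / N) * u ^ (k % N)

theorem exp_le_expUpper {u : ℝ} {N : ℕ} (hN : 0 < N) (hu : exp (1 / N) ≤ u) (k : ℕ) :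
    exp (k / N) ≤ expUpper u N k := by
  have hk : (k : ℝ) / N = (k / N : ℕ) * 1 + (k % N : ℕ) * (1 / N) := by
    conv_lhs => rw [← Nat.div_add_mod k N]
    push_cast
    field_simp
  rw [hk, exp_add, exp_nat_mul, exp_nat_mul, expUpper]
  gcongr
  exact exp_one_lt_d9.le

/-- `Certified c u N k₀ [k₁, …, kₙ]`: each interval `[kᵢ/N, kᵢ₊₁/N]` passes the test of
`mul_defect_lt_of_log_mem_Icc`, and `defect c` is already nonpositive from `kₙ/N` on. -/
def Certified (c u : ℝ) (N : ℕ) : ℕ → List ℕ → Prop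
  | k, [] => defectUpper c (k / N) ≤ 0
  | k, k' :: l => k < k' ∧ 2 * expUpper u N k' * defectUpper c (k / N) ^ 2 < (k / N - c) ^ 2 ∧
      Certified c u N k' l

theorem mul_defect_lt_of_certified {c u ξ : ℝ} {N k : ℕ} {l : List ℕ} (hξ : 0 < ξ) (hc : 0 ≤ c)
    (hN : 0 < N) (hu : exp (1 / N) ≤ u) (hk : c < k / N) (hkξ : k / N ≤ log ξ)
    (hcert : Certified c u N k l) :
    ξ * defect c (log ξ) < √(ξ / 2) * (log ξ - c) := by
  induction l generalizing k with
  | nil =>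
    refine mul_defect_lt_of_nonpos hξ (hk.trans_le hkξ) ?_
    exact (defect_antitoneOn hc hk (hk.trans_le hkξ) hkξ).trans
      ((defect_le_defectUpper hc hk).trans hcert)
  | cons k' l ih =>
    obtain ⟨hkk', hstep, hrest⟩ := hcert
    rcases le_or_gt (log ξ) (k' / N) with hξk' | hξk'
    · exact mul_defect_lt_of_log_mem_Icc hξ hc hk ⟨hkξ, hξk'⟩ (exp_le_expUpper hN hu k') hstep
    · have hkk'N : (k : ℝ) / N ≤ k' / N := by gcongr
      exact ih (hk.trans_le hkk'N) hξk'.le hrest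

theorem exp_one_div_32_le : exp (1 / 32) ≤ 1.031743408 := by
  refine le_of_pow_le_pow_left₀ (n := 32) (by norm_num) (by norm_num) ?_
  rw [← exp_nat_mul]
  norm_num
  exact exp_one_lt_d9.le.trans (by norm_num)

theorem mul_defect_lt {ξ : ℝ} (hξ : 4 ≤ ξ) :
    ξ * defect 0.371 (log ξ) < √(ξ / 2) * (log ξ - 0.371) := by
  have hξ0 : 0 < ξ := by linarith
  have hu : exp (1 / (32 : ℕ)) ≤ 1.031743408 := by exact_mod_cast exp_one_div_32_le
  -- The margin near `log 4 ≈ 1.3863` is too small to start from the grid point `44/32`.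
  have hlog : 1.386 ≤ log ξ := calc
    (1.386 : ℝ) ≤ 2 * log 2 := by linarith [log_two_gt_d9]
    _ = log 4 := by rw [← log_rpow two_pos]; norm_num
    _ ≤ log ξ := log_le_log (by norm_num) hξ
  rcases le_or_gt (log ξ) ((45 : ℕ) / (32 : ℕ)) with hξ45 | hξ45
  · refine mul_defect_lt_of_log_mem_Icc hξ0 (by norm_num) (by norm_num) ⟨hlog, hξ45⟩
      (exp_le_expUpper (by norm_num) hu 45) ?_
    norm_num [defectUpper, expUpper]
  -- Each grid point is the largest one that the previous one certifies.
  · refine mul_defect_lt_of_certified (l := [47, 55, 81, 142, 230, 309, 364, 400, 424, 441, 454,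
      464, 472, 478, 484, 489, 494, 499, 504, 509, 515, 522, 531, 543, 564, 619])
      hξ0 (by norm_num) (by norm_num) hu (by norm_num) hξ45.le ?_
    norm_num [Certified, defectUpper, expUpper]

end SqrtHalfBound

open SqrtHalfBound in
theorem stmt16 (ξ ξ₂ : ℝ) (hξ : 4 ≤ ξ) (hξ₂ : 1 < ξ₂)
    (heq : (ξ₂ ^ 2 - ξ₂) / Real.log ξ₂ = ξ / Real.log ξ) :
    Real.sqrt (ξ / 2) * (1 - 0.371 / Real.log ξ) < ξ₂ := by
  rcases le_or_gt (Real.sqrt (ξ / 2) * (1 - 0.371 / Real.log ξ)) 1 with hΦ | hΦ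
  · linarith
  have hlt := sub_div_log_lt_of_mul_defect_lt (by linarith) rfl hΦ (mul_defect_lt hξ)
  rw [← heq] at hlt
  exact (strictMonoOn_sub_div_log.lt_iff_lt hΦ hξ₂).mp hlt
end
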